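/- arXiv:1811.02316 — 3 statements merged into one kernel-verified Lean document; each statement's English description precedes it below -/
import Mathlib

section
/- Let y = (y_1, ..., y_n) be a real vector with positive empirical variance, let S_1, ..., S_K be a partition of the index set {1, ..., n} with |S_k| < n for all k, and let z be the K-fold cross-validated intercept-only predictor defined by z_i = (1/(n - |S_k|)) * Σ_{j ∉ S_k} y_j for all i ∈ S_k. Assume z has positive empirical variance. Then the Pearson correlation between y and z equals ρ(y, z) = − [ Σ_{k=1}^{K} ( Σ_{j ∈ S_k} (y_j − ȳ) )² / (n − |S_k|) ] / [ (n − 1) σ(y) σ(z) ], where ȳ = (1/n) Σ_{j=1}^n y_j, σ²(y) = (n−1)^{-1} Σ_{j=1}^n (y_j − ȳ)² and σ²(z) = (n−1)^{-1} Σ_{j=1}^n (z_j − z̄)² with z̄ = (1/n) Σ_{j=1}^n z_j. In particular ρ(y, z) is negative. -/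
open Finset

/-
Writing `T_k = ∑_{j ∈ S_k} (y_j - ȳ)` and `c_k = |S_k|`, the out-of-fold mean on `S_k` is
`z_i = (n ȳ - (T_k + c_k ȳ)) / (n - c_k)`, so `z_i - ȳ = -T_k / (n - c_k)`. Since the centred
`y` sums to zero, the covariance of `y` and `z` may be centred at `ȳ` instead of `z̄`, and
summing fold by fold gives `∑_k T_k · (-T_k / (n - c_k)) = -∑_k T_k² / (n - c_k)`. This is
`≤ 0`, and it vanishes only if every `T_k = 0`, i.e. if `z` is constant, which `σ²(z) > 0`
excludes.
-/

noncomputable def eMean {n : ℕ} (v : Fin n → ℝ) : ℝ := (∑ j, v j) / n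

noncomputable def eVar {n : ℕ} (v : Fin n → ℝ) : ℝ :=
  (∑ j, (v j - eMean v) ^ 2) / ((n : ℝ) - 1)

noncomputable def eSD {n : ℕ} (v : Fin n → ℝ) : ℝ := Real.sqrt (eVar v)

noncomputable def eCorr {n : ℕ} (u v : Fin n → ℝ) : ℝ :=
  (∑ j, (u j - eMean u) * (v j - eMean v)) / (((n : ℝ) - 1) * eSD u * eSD v)

theorem Finset.sum_eq_sum_sum_of_existsUnique {ι κ M : Type*} [Fintype ι] [Fintype κ]
    [AddCommMonoid M] (S : κ → Finset ι) (hS : ∀ i, ∃! k, i ∈ S k) (f : ι → M) :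
    ∑ i, f i = ∑ k, ∑ i ∈ S k, f i := by
  classical
  choose block hblock hblock_unique using hS
  rw [← Finset.sum_fiberwise univ block f]
  refine Finset.sum_congr rfl fun k _ => Finset.sum_congr ?_ fun _ _ => rfl
  ext i
  simp only [mem_filter, mem_univ, true_and]
  exact ⟨fun h => h ▸ hblock i, fun h => (hblock_unique i k h).symm⟩

section EmpiricalMoments

variable {n : ℕ}

theorem one_lt_of_eVar_pos {v : Fin n → ℝ} (h : 0 < eVar v) : (1 : ℝ) < n := by
  by_contra! hn
  have : eVar v ≤ 0 :=
    div_nonpos_of_nonneg_of_nonpos (sum_nonneg fun _ _ => sq_nonneg _) (by linarith)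
  linarith

theorem sum_eq_mul_eMean (v : Fin n → ℝ) (hn : n ≠ 0) : ∑ j, v j = n * eMean v := by
  rw [eMean, mul_div_cancel₀ _ (Nat.cast_ne_zero.mpr hn)]

theorem sum_sub_eMean (v : Fin n → ℝ) : ∑ j, (v j - eMean v) = 0 := by
  rcases eq_or_ne n 0 with rfl | hn
  · simp
  · rw [sum_sub_distrib, sum_eq_mul_eMean v hn]
    simp

theorem sum_sub_eMean_mul_sub_eq (u v : Fin n → ℝ) (a b : ℝ) :
    ∑ j, (u j - eMean u) * (v j - a) = ∑ j, (u j - eMean u) * (v j - b) := by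
  have hdiff : ∑ j, (u j - eMean u) * (v j - a) - ∑ j, (u j - eMean u) * (v j - b)
      = (b - a) * ∑ j, (u j - eMean u) := by
    rw [← sum_sub_distrib, mul_sum]
    exact sum_congr rfl fun _ _ => by ring
  rw [sum_sub_eMean, mul_zero] at hdiff
  linarith

theorem eVar_const (c : ℝ) : eVar (fun _ : Fin n => c) = 0 := by
  rcases eq_or_ne n 0 with rfl | hn
  · simp [eVar]
  · have hmean : eMean (fun _ : Fin n => c) = c := by
      simp [eMean, Nat.cast_ne_zero.mpr hn]
    simp [eVar, hmean]

end EmpiricalMoments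

section CrossValidation

variable {n K : ℕ}

theorem sum_compl_div_sub_eMean (y : Fin n → ℝ) {s : Finset (Fin n)} (hs : s.card < n) :
    (∑ j ∈ sᶜ, y j) / ((n : ℝ) - s.card) - eMean y
      = -(∑ j ∈ s, (y j - eMean y)) / ((n : ℝ) - s.card) := by
  have hgap : (n : ℝ) - s.card ≠ 0 := sub_ne_zero.mpr (by exact_mod_cast hs.ne')
  have hcompl : ∑ j ∈ sᶜ, y j = n * eMean y - ∑ j ∈ s, y j := by
    rw [← sum_eq_mul_eMean y (by omega), ← sum_compl_add_sum s y]
    ring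
  rw [hcompl, sum_sub_distrib, sum_const, nsmul_eq_mul]
  field_simp
  ring

theorem sum_sub_eMean_mul_crossVal {y z : Fin n → ℝ} {S : Fin K → Finset (Fin n)}
    (hpart : ∀ i, ∃! k, i ∈ S k) (hcard : ∀ k, (S k).card < n)
    (hz : ∀ k, ∀ i ∈ S k, z i = (∑ j ∈ (S k)ᶜ, y j) / ((n : ℝ) - (S k).card)) :
    ∑ j, (y j - eMean y) * (z j - eMean z)
      = -∑ k, (∑ j ∈ S k, (y j - eMean y)) ^ 2 / ((n : ℝ) - (S k).card) := by
  rw [sum_sub_eMean_mul_sub_eq y z (eMean z) (eMean y),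
    sum_eq_sum_sum_of_existsUnique S hpart, ← sum_neg_distrib]
  refine sum_congr rfl fun k _ => ?_
  calc ∑ i ∈ S k, (y i - eMean y) * (z i - eMean y)
      = ∑ i ∈ S k, (y i - eMean y) *
          (-(∑ j ∈ S k, (y j - eMean y)) / ((n : ℝ) - (S k).card)) :=
        sum_congr rfl fun i hi => by rw [hz k i hi, sum_compl_div_sub_eMean y (hcard k)]
    _ = -((∑ j ∈ S k, (y j - eMean y)) ^ 2 / ((n : ℝ) - (S k).card)) := by
        rw [← sum_mul]
        ring

theorem sum_sq_div_pos_of_crossVal {y z : Fin n → ℝ} {S : Fin K → Finset (Fin n)}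
    (hpart : ∀ i, ∃! k, i ∈ S k) (hcard : ∀ k, (S k).card < n)
    (hz : ∀ k, ∀ i ∈ S k, z i = (∑ j ∈ (S k)ᶜ, y j) / ((n : ℝ) - (S k).card))
    (hzv : 0 < eVar z) :
    0 < ∑ k, (∑ j ∈ S k, (y j - eMean y)) ^ 2 / ((n : ℝ) - (S k).card) := by
  have hgap : ∀ k, 0 < (n : ℝ) - (S k).card := fun k => sub_pos.mpr (by exact_mod_cast hcard k)
  have hterm_nonneg : ∀ k ∈ (univ : Finset (Fin K)),
      0 ≤ (∑ j ∈ S k, (y j - eMean y)) ^ 2 / ((n : ℝ) - (S k).card) :=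
    fun k _ => div_nonneg (sq_nonneg _) (hgap k).le
  refine (sum_nonneg hterm_nonneg).lt_of_ne fun hzero => hzv.ne' ?_
  have hblock_zero : ∀ k, ∑ j ∈ S k, (y j - eMean y) = 0 := fun k => by
    have := (sum_eq_zero_iff_of_nonneg hterm_nonneg).mp hzero.symm k (mem_univ k)
    simpa [(hgap k).ne'] using this
  have hz_const : z = fun _ => eMean y := funext fun i => by
    obtain ⟨k, hik, -⟩ := hpart i
    have := sum_compl_div_sub_eMean y (hcard k)
    rwa [← hz k i hik, hblock_zero k, neg_zero, zero_div, sub_eq_zero] at this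
  rw [hz_const, eVar_const]

end CrossValidation

/-- For a partition `S` of `{1,…,n}` with `|S_k| < n`, and `z` the K-fold
cross-validated intercept-only predictor, the Pearson correlation between `y` and `z`
equals the stated negative expression, and in particular is negative. -/
theorem stmt_0 {n K : ℕ} (y z : Fin n → ℝ) (S : Fin K → Finset (Fin n))
    (hpart : ∀ i : Fin n, ∃! k : Fin K, i ∈ S k)
    (hcard : ∀ k : Fin K, (S k).card < n)
    (hz : ∀ k : Fin K, ∀ i ∈ S k,
      z i = (∑ j ∈ (S k)ᶜ, y j) / ((n : ℝ) - (S k).card))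
    (hy : 0 < eVar y) (hzv : 0 < eVar z) :
    eCorr y z =
      -(∑ k : Fin K, (∑ j ∈ S k, (y j - eMean y)) ^ 2 / ((n : ℝ) - (S k).card)) /
        (((n : ℝ) - 1) * eSD y * eSD z) ∧
    eCorr y z < 0 := by
  have hcorr : eCorr y z =
      -(∑ k : Fin K, (∑ j ∈ S k, (y j - eMean y)) ^ 2 / ((n : ℝ) - (S k).card)) /
        (((n : ℝ) - 1) * eSD y * eSD z) := by
    rw [eCorr, sum_sub_eMean_mul_crossVal hpart hcard hz]
  have hdenom : 0 < ((n : ℝ) - 1) * eSD y * eSD z :=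
    mul_pos (mul_pos (sub_pos.mpr (one_lt_of_eVar_pos hy)) (Real.sqrt_pos.mpr hy))
      (Real.sqrt_pos.mpr hzv)
  refine ⟨hcorr, ?_⟩
  rw [hcorr]
  exact div_neg_of_neg_of_pos (neg_neg_of_pos (sum_sq_div_pos_of_crossVal hpart hcard hz hzv))
    hdenom
end

section
/- Let y ∈ ℝ^n (n ≥ 3) have positive empirical variance, let z¹ be the leave-one-out cross-validated predictor of the intercept-only model, z¹_i = (1/(n−1)) Σ_{j ≠ i} y_j, and let z² ∈ ℝ^n have positive empirical variance with Pearson correlation satisfying 0 < ρ(y, z²) < 1. Consider the least-squares regression of y on an intercept together with z¹ and z², i.e. the minimizers (β̂₀, β̂₁, β̂₂) of Σ_{i=1}^n (y_i − β₀ − β₁ z¹_i − β₂ z²_i)². Then the least-squares coefficient of z¹ equals β̂₁ = 1 − n. -/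
open Finset

/-!
Adding `(1 - n) z¹` to the total `∑ yⱼ` recovers `y` exactly, so the least-squares fit has zero
residuals and `y = b₀ + b₁ z¹ + b₂ z²`. Unless `b₁ = 1 - n`, eliminating `z¹` between these two
identities writes `y` as an affine function of `z²`; the correlation of `y` with `z²` would then be
the sign of the slope, which is never strictly between `0` and `1`.
-/

lemma eq_zero_of_sum_sq_nonpos {ι : Type*} {s : Finset ι} {r : ι → ℝ}
    (h : ∑ i ∈ s, r i ^ 2 ≤ 0) : ∀ i ∈ s, r i = 0 := by
  have hsum : ∑ i ∈ s, r i ^ 2 = 0 := le_antisymm h (sum_nonneg fun i _ => sq_nonneg (r i))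
  intro i hi
  exact pow_eq_zero_iff two_ne_zero |>.mp <|
    (sum_eq_zero_iff_of_nonneg fun i _ => sq_nonneg (r i)).mp hsum i hi

lemma sum_add_mul_sum_erase_div_eq_self {n : ℕ} (hn : (n : ℝ) - 1 ≠ 0) (y : Fin n → ℝ) (i : Fin n) :
    ∑ j, y j + (1 - n) * ((∑ j ∈ univ.erase i, y j) / ((n : ℝ) - 1)) = y i := by
  rw [sum_erase_eq_sub (mem_univ i)]
  field_simp
  ring

section AffineImage

variable {n : ℕ} (c a : ℝ) (v : Fin n → ℝ)

lemma eMean_const_add_mul (hn : n ≠ 0) : eMean (fun i => c + a * v i) = c + a * eMean v := by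
  simp only [eMean, sum_add_distrib, ← mul_sum, sum_const, card_univ, Fintype.card_fin,
    nsmul_eq_mul]
  field_simp

lemma eVar_const_add_mul (hn : n ≠ 0) : eVar (fun i => c + a * v i) = a ^ 2 * eVar v := by
  simp only [eVar, eMean_const_add_mul c a v hn, add_sub_add_left_eq_sub, ← mul_sub, mul_pow,
    ← mul_sum, mul_div_assoc]

lemma eSD_const_add_mul (hn : n ≠ 0) : eSD (fun i => c + a * v i) = |a| * eSD v := by
  rw [eSD, eVar_const_add_mul c a v hn, Real.sqrt_mul (sq_nonneg a), Real.sqrt_sq_eq_abs, eSD]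

lemma eCorr_const_add_mul (hv : 0 < eVar v) : eCorr (fun i => c + a * v i) v = Real.sign a := by
  have hn : n ≠ 0 := by
    rintro rfl
    simp [eVar] at hv
  have hn1 : (n : ℝ) - 1 ≠ 0 := by
    intro h
    simp [eVar, h] at hv
  have hsq : eSD v * eSD v = eVar v := Real.mul_self_sqrt hv.le
  have hsum : ∑ j, (v j - eMean v) * (v j - eMean v) = ((n : ℝ) - 1) * eVar v := by
    simp only [eVar, ← sq]
    field_simp
  simp only [eCorr, eMean_const_add_mul c a v hn, eSD_const_add_mul c a v hn,
    add_sub_add_left_eq_sub, ← mul_sub, mul_assoc, ← mul_sum, hsum, hsq]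
  rw [mul_left_comm, mul_div_mul_left _ _ hn1, mul_div_mul_right _ _ hv.ne']
  rcases lt_trichotomy a 0 with ha | rfl | ha
  · rw [Real.sign_of_neg ha, abs_of_neg ha, div_neg, div_self ha.ne]
  · simp
  · rw [Real.sign_of_pos ha, abs_of_pos ha, div_self ha.ne']

end AffineImage

theorem stmt_7_general {n : ℕ} (hn : 3 ≤ n) (y z1 z2 : Fin n → ℝ)
    (h2 : 0 < eVar z2)
    (hz1 : ∀ i : Fin n, z1 i = (∑ j ∈ Finset.univ.erase i, y j) / ((n : ℝ) - 1))
    (hc2 : 0 < eCorr y z2) (hc2' : eCorr y z2 < 1)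
    (b0 b1 b2 : ℝ)
    (hmin : ∀ c0 c1 c2 : ℝ,
      ∑ i, (y i - b0 - b1 * z1 i - b2 * z2 i) ^ 2 ≤
        ∑ i, (y i - c0 - c1 * z1 i - c2 * z2 i) ^ 2) :
    b1 = 1 - (n : ℝ) := by
  have hn1 : (n : ℝ) - 1 ≠ 0 := by
    have : (3 : ℝ) ≤ n := by exact_mod_cast hn
    linarith
  set S := ∑ j, y j
  have hy : ∀ i, y i = S + (1 - n) * z1 i := fun i => by
    rw [hz1, sum_add_mul_sum_erase_div_eq_self hn1]
  have hfit : ∀ i, y i - b0 - b1 * z1 i - b2 * z2 i = 0 := by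
    refine fun i => eq_zero_of_sum_sq_nonpos ((hmin S (1 - n) 0).trans_eq ?_) i (mem_univ i)
    exact sum_eq_zero fun i _ => by rw [hy i]; ring
  by_contra hb1
  have hk : 1 - n - b1 ≠ 0 := sub_ne_zero.2 (Ne.symm hb1)
  have hy_affine : y = fun i => (S + (1 - n) * (b0 - S) / (1 - n - b1)) +
      ((1 - n) * b2 / (1 - n - b1)) * z2 i := by
    funext i
    field_simp
    linear_combination (-b1) * hy i + (1 - n) * hfit i
  have hcorr := eCorr_const_add_mul (S + (1 - n) * (b0 - S) / (1 - n - b1))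
    ((1 - n) * b2 / (1 - n - b1)) z2 h2
  rw [← hy_affine] at hcorr
  rcases Real.sign_apply_eq ((1 - n) * b2 / (1 - n - b1)) with h | h | h <;> linarith

/-- Regressing `y` by least squares on an intercept, the leave-one-out
cross-validated intercept-only predictor `z¹`, and a second predictor `z²` with
`0 < ρ(y, z²) < 1`, the coefficient of `z¹` equals `1 - n`. -/
theorem stmt_7 {n : ℕ} (hn : 3 ≤ n) (y z1 z2 : Fin n → ℝ)
    (hy : 0 < eVar y) (h2 : 0 < eVar z2)
    (hz1 : ∀ i : Fin n, z1 i = (∑ j ∈ Finset.univ.erase i, y j) / ((n : ℝ) - 1))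
    (hc2 : 0 < eCorr y z2) (hc2' : eCorr y z2 < 1)
    (b0 b1 b2 : ℝ)
    (hmin : ∀ c0 c1 c2 : ℝ,
      ∑ i, (y i - b0 - b1 * z1 i - b2 * z2 i) ^ 2 ≤
        ∑ i, (y i - c0 - c1 * z1 i - c2 * z2 i) ^ 2) :
    b1 = 1 - (n : ℝ) :=
  stmt_7_general hn y z1 z2 h2 hz1 hc2 hc2' b0 b1 b2 hmin
end

section
/- Let y ∈ ℝ^n (n ≥ 3) have positive empirical variance, let z¹ be the leave-one-out cross-validated predictor of the intercept-only model, z¹_i = (1/(n−1)) Σ_{j ≠ i} y_j, and let z² ∈ ℝ^n have positive empirical variance with Pearson correlation satisfying 0 < ρ(y, z²) < 1. Consider the least-squares regression of y on an intercept together with z¹ and z², i.e. the minimizers (β̂₀, β̂₁, β̂₂) of Σ_{i=1}^n (y_i − β₀ − β₁ z¹_i − β₂ z²_i)². Then the least-squares coefficient of z² equals β̂₂ = 0. -/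
open Finset

/-!
The leave-one-out predictor is affine in `y`: `y i = ∑ j, y j - (n - 1) * z¹ i`. Hence an
intercept together with `z¹` already fits `y` exactly, so every least-squares solution has zero
residuals. If `β̂₂ ≠ 0`, solving the residual equation for `z²` makes `z²` an affine function of
`y`, and the correlation of `y` with an affine image of itself is `-1`, `1`, or the junk value `0`
of a division by zero, never strictly between `0` and `1`.
-/

section Affine

variable {n : ℕ} (u : Fin n → ℝ) (a d : ℝ)

lemma eMean_affine (hn : n ≠ 0) : eMean (fun i => a * u i + d) = a * eMean u + d := by
  have hn' : (n : ℝ) ≠ 0 := Nat.cast_ne_zero.mpr hn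
  simp only [eMean, sum_add_distrib, ← mul_sum, sum_const, card_univ, Fintype.card_fin,
    nsmul_eq_mul]
  field_simp

lemma affine_sub_eMean_affine (i : Fin n) :
    a * u i + d - eMean (fun j => a * u j + d) = a * (u i - eMean u) := by
  rw [eMean_affine u a d i.pos.ne']
  ring

lemma eVar_affine : eVar (fun i => a * u i + d) = a ^ 2 * eVar u := by
  simp only [eVar, affine_sub_eMean_affine, mul_pow, ← mul_sum, mul_div_assoc]

lemma eSD_affine : eSD (fun i => a * u i + d) = |a| * eSD u := by
  rw [eSD, eSD, eVar_affine, Real.sqrt_mul (sq_nonneg a), Real.sqrt_sq_eq_abs]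

lemma eCorr_affine : eCorr u (fun i => a * u i + d) = a / |a| * eCorr u u := by
  simp only [eCorr, affine_sub_eMean_affine, eSD_affine, mul_left_comm _ a, ← mul_sum]
  rw [div_mul_div_comm]
  congr 1
  ring

lemma eCorr_self_eq_zero_or_one : eCorr u u = 0 ∨ eCorr u u = 1 := by
  by_cases hV : 0 ≤ eVar u
  · have hSD : eSD u * eSD u = eVar u := Real.mul_self_sqrt hV
    rw [eCorr, mul_assoc, hSD, eVar]
    simp only [← sq]
    by_cases hN : ∑ j, (u j - eMean u) ^ 2 = 0
    · simp [hN]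
    by_cases hm : (n : ℝ) - 1 = 0
    · simp [hm]
    right
    field_simp
  · left
    simp [eCorr, eSD, Real.sqrt_eq_zero'.mpr (le_of_not_ge hV)]

lemma eCorr_affine_not_mem_Ioo : eCorr u (fun i => a * u i + d) ∉ Set.Ioo 0 1 := by
  rw [eCorr_affine]
  rcases eCorr_self_eq_zero_or_one u with h | h <;> rw [h]
  · simp
  rcases lt_trichotomy a 0 with ha | rfl | ha
  · simp [abs_of_neg ha, div_neg_self ha.ne]
  · simp
  · simp [abs_of_pos ha, div_self ha.ne']

end Affine

lemma residual_eq_zero_of_exact_fit {ι : Type*} [Fintype ι] {y x₁ x₂ : ι → ℝ}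
    {b₀ b₁ b₂ c₀ c₁ : ℝ} (hfit : ∀ i, y i = c₀ + c₁ * x₁ i)
    (hmin : ∀ c₀ c₁ c₂ : ℝ,
      ∑ i, (y i - b₀ - b₁ * x₁ i - b₂ * x₂ i) ^ 2 ≤ ∑ i, (y i - c₀ - c₁ * x₁ i - c₂ * x₂ i) ^ 2)
    (i : ι) : y i - b₀ - b₁ * x₁ i - b₂ * x₂ i = 0 := by
  have hle : ∑ i, (y i - b₀ - b₁ * x₁ i - b₂ * x₂ i) ^ 2 ≤ 0 :=
    (hmin c₀ c₁ 0).trans_eq (sum_eq_zero fun i _ => by rw [hfit i]; ring)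
  have hzero := (sum_eq_zero_iff_of_nonneg fun i _ => sq_nonneg _).mp
    (hle.antisymm (sum_nonneg fun i _ => sq_nonneg _)) i (mem_univ i)
  exact pow_eq_zero_iff two_ne_zero |>.mp hzero

lemma eq_sum_sub_mul_of_leaveOneOut {n : ℕ} {y z : Fin n → ℝ} (hn : (n : ℝ) - 1 ≠ 0)
    (hz : ∀ i, z i = (∑ j ∈ univ.erase i, y j) / ((n : ℝ) - 1)) (i : Fin n) :
    y i = ∑ j, y j - ((n : ℝ) - 1) * z i := by
  rw [hz i, mul_div_cancel₀ _ hn, ← add_sum_erase _ _ (mem_univ i)]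
  ring

theorem stmt_8_general {n : ℕ} (hn : 3 ≤ n) (y z1 z2 : Fin n → ℝ)
    (hz1 : ∀ i : Fin n, z1 i = (∑ j ∈ Finset.univ.erase i, y j) / ((n : ℝ) - 1))
    (hc2 : 0 < eCorr y z2) (hc2' : eCorr y z2 < 1)
    (b0 b1 b2 : ℝ)
    (hmin : ∀ c0 c1 c2 : ℝ,
      ∑ i, (y i - b0 - b1 * z1 i - b2 * z2 i) ^ 2 ≤
        ∑ i, (y i - c0 - c1 * z1 i - c2 * z2 i) ^ 2) :
    b2 = 0 := by
  have hm : (n : ℝ) - 1 ≠ 0 := by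
    have : (3 : ℝ) ≤ n := by exact_mod_cast hn
    linarith
  set m : ℝ := (n : ℝ) - 1
  have hloo := eq_sum_sub_mul_of_leaveOneOut hm hz1
  have hres := residual_eq_zero_of_exact_fit (c₁ := -m) (fun i => (hloo i).trans (by ring)) hmin
  by_contra hb2
  have hz2 : z2 = fun i => (m + b1) / (m * b2) * y i + -(m * b0 + b1 * ∑ j, y j) / (m * b2) := by
    funext i
    field_simp
    linear_combination (-m) * hres i - b1 * hloo i
  subst hz2
  exact eCorr_affine_not_mem_Ioo y _ _ ⟨hc2, hc2'⟩

/-- Regressing `y` by least squares on an intercept, the leave-one-out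
cross-validated intercept-only predictor `z¹`, and a second predictor `z²` with
`0 < ρ(y, z²) < 1`, the coefficient of `z²` equals `0`. -/
theorem stmt_8 {n : ℕ} (hn : 3 ≤ n) (y z1 z2 : Fin n → ℝ)
    (hy : 0 < eVar y) (h2 : 0 < eVar z2)
    (hz1 : ∀ i : Fin n, z1 i = (∑ j ∈ Finset.univ.erase i, y j) / ((n : ℝ) - 1))
    (hc2 : 0 < eCorr y z2) (hc2' : eCorr y z2 < 1)
    (b0 b1 b2 : ℝ)
    (hmin : ∀ c0 c1 c2 : ℝ,
      ∑ i, (y i - b0 - b1 * z1 i - b2 * z2 i) ^ 2 ≤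
        ∑ i, (y i - c0 - c1 * z1 i - c2 * z2 i) ^ 2) :
    b2 = 0 :=
  stmt_8_general hn y z1 z2 hz1 hc2 hc2' b0 b1 b2 hmin
end
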